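/- Let u₀: {p₁,p₂,p₃} → ℝ with u₀(p₁)=a, u₀(p₂)=b, u₀(p₃)=c. The harmonic extension ũ of u₀ to level 1 of the Hanoi graph takes the value ((2+3α)a + 2b + c)/(5+3α) at the vertex G_{α,1}(p₂), and satisfies E₁[ũ] = (3/(5+3α))·E₀[u₀] up to the normalization; in particular the energy minimization is linear in (a,b,c). -/
import Mathlib


noncomputable section

/-- The level-1 energy on the Hanoi graph.  A function on the nine vertices
`W₁` is encoded as `u : Fin 3 → Fin 3 → ℝ`, where `u i j` is the value at
`G_{α,i}(p_j)`.  Edges inside each small triangle have conductance `1`, the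
three connecting segments have conductance `1/α`. -/
def hanoiEnergy1 (α : ℝ) (u : Fin 3 → Fin 3 → ℝ) : ℝ :=
  (∑ i : Fin 3, ((u i 0 - u i 1)^2 + (u i 1 - u i 2)^2 + (u i 0 - u i 2)^2))
    + (1/α) * ((u 0 1 - u 1 0)^2 + (u 0 2 - u 2 0)^2 + (u 1 2 - u 2 1)^2)

set_option maxHeartbeats 1000000 in
/-- For boundary data `u₀(p₁)=a, u₀(p₂)=b, u₀(p₃)=c` the level-1 harmonic
extension on the Hanoi graph takes the value `((2+3α)a + 2b + c)/(5+3α)` at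
`G_{α,1}(p₂)`, and its (minimal) level-1 energy equals
`(3/(5+3α)) · E₀[u₀]` where `E₀[u₀] = (a-b)² + (b-c)² + (a-c)²`;
in particular the extension depends linearly on `(a,b,c)`. -/
theorem hanoi_harmonic_extension_linear (α a b c : ℝ)
    (hα : α ∈ Set.Ioo (0 : ℝ) (1/3)) :
    ∃ u : Fin 3 → Fin 3 → ℝ,
      (u 0 0 = a ∧ u 1 1 = b ∧ u 2 2 = c) ∧
      (∀ v : Fin 3 → Fin 3 → ℝ, (v 0 0 = a ∧ v 1 1 = b ∧ v 2 2 = c) →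
        hanoiEnergy1 α u ≤ hanoiEnergy1 α v) ∧
      u 0 1 = ((2 + 3*α)*a + 2*b + c)/(5 + 3*α) ∧
      hanoiEnergy1 α u = (3/(5 + 3*α)) * ((a - b)^2 + (b - c)^2 + (a - c)^2) := by
  obtain ⟨hα0, hα1⟩ := hα
  have hαne : α ≠ 0 := ne_of_gt hα0
  have hD : (5 : ℝ) + 3*α > 0 := by linarith
  have hDne : (5 : ℝ) + 3*α ≠ 0 := ne_of_gt hD
  set D : ℝ := 5 + 3*α with hDdef
  refine ⟨![![a, ((2 + 3*α)*a + 2*b + c)/D, ((2 + 3*α)*a + 2*c + b)/D],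
            ![((2 + 3*α)*b + 2*a + c)/D, b, ((2 + 3*α)*b + 2*c + a)/D],
            ![((2 + 3*α)*c + 2*a + b)/D, ((2 + 3*α)*c + 2*b + a)/D, c]],
          ⟨rfl, rfl, rfl⟩, ?_, rfl, ?_⟩
  · intro v ⟨hv0, hv1, hv2⟩
    have key : hanoiEnergy1 α v =
        hanoiEnergy1 α ![![a, ((2 + 3*α)*a + 2*b + c)/D, ((2 + 3*α)*a + 2*c + b)/D],
            ![((2 + 3*α)*b + 2*a + c)/D, b, ((2 + 3*α)*b + 2*c + a)/D],
            ![((2 + 3*α)*c + 2*a + b)/D, ((2 + 3*α)*c + 2*b + a)/D, c]]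
        + ((v 0 1 - ((2 + 3*α)*a + 2*b + c)/D)^2
          + (v 0 1 - ((2 + 3*α)*a + 2*b + c)/D - (v 0 2 - ((2 + 3*α)*a + 2*c + b)/D))^2
          + (v 0 2 - ((2 + 3*α)*a + 2*c + b)/D)^2
          + (v 1 0 - ((2 + 3*α)*b + 2*a + c)/D)^2
          + (v 1 0 - ((2 + 3*α)*b + 2*a + c)/D - (v 1 2 - ((2 + 3*α)*b + 2*c + a)/D))^2
          + (v 1 2 - ((2 + 3*α)*b + 2*c + a)/D)^2
          + (v 2 0 - ((2 + 3*α)*c + 2*a + b)/D - (v 2 1 - ((2 + 3*α)*c + 2*b + a)/D))^2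
          + (v 2 1 - ((2 + 3*α)*c + 2*b + a)/D)^2
          + (v 2 0 - ((2 + 3*α)*c + 2*a + b)/D)^2
          + (1/α) * ((v 0 1 - ((2 + 3*α)*a + 2*b + c)/D - (v 1 0 - ((2 + 3*α)*b + 2*a + c)/D))^2
            + (v 0 2 - ((2 + 3*α)*a + 2*c + b)/D - (v 2 0 - ((2 + 3*α)*c + 2*a + b)/D))^2
            + (v 1 2 - ((2 + 3*α)*b + 2*c + a)/D - (v 2 1 - ((2 + 3*α)*c + 2*b + a)/D))^2)) := by
      simp only [hanoiEnergy1, Fin.sum_univ_three, Matrix.cons_val_zero, Matrix.cons_val_one,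
        Matrix.head_cons, Matrix.cons_val_two, Matrix.tail_cons, hv0, hv1, hv2, hDdef]
      field_simp
      ring
    rw [key]
    have h1α : (0:ℝ) ≤ 1/α := by positivity
    have hnn : (0:ℝ) ≤ 1/α := by positivity
    exact le_add_of_nonneg_right (by positivity)
  · simp only [hanoiEnergy1, Fin.sum_univ_three, Matrix.cons_val_zero, Matrix.cons_val_one,
      Matrix.head_cons, Matrix.cons_val_two, Matrix.tail_cons, hDdef]
    field_simp
    ring
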